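/- arXiv:2504.02295 — 2 statements merged into one kernel-verified Lean document; each statement's English description precedes it below -/
import Mathlib

section
/- Let K = the algebraic closure of F_p(t), let q be a power of p, let d be a positive integer with q ∤ d, let α ∈ K be a generator of the multiplicative cyclic group F_q^×, and let x ∈ K be a d-th root of t^d + α. Then {n ∈ ℤ : x^n = t^n + α} = {d·q^m : m ∈ ℕ}. -/
open Polynomial

private lemma aux_key {F : Type*} [Field F] (p : ℕ) [Fact p.Prime] [CharP F p] :
    ∀ s : ℕ, 0 < s → ∀ β γ : F, β ≠ 0 →
      (X + C β) ^ s = X ^ s + C γ → ∃ i : ℕ, s = p ^ i ∧ γ = β ^ p ^ i := by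
  have hp := (Fact.out : p.Prime)
  intro s
  induction s using Nat.strong_induction_on with
  | _ s ih =>
    intro hs β γ hβ h
    rcases eq_or_lt_of_le (show 1 ≤ s from hs) with h1 | h2
    · -- s = 1
      have hs1 : s = 1 := h1.symm
      subst hs1
      have hc := congrArg (fun P => Polynomial.coeff P 0) h
      simp only [pow_one, coeff_add, coeff_X_zero, coeff_C_zero, zero_add] at hc
      exact ⟨0, by norm_num, by simpa using hc.symm⟩
    · by_cases hps : p ∣ s
      · obtain ⟨s', rfl⟩ := hps
        have hs' : 0 < s' := Nat.pos_of_ne_zero (by rintro rfl; simp at hs)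
        have hlt : s' < p * s' := by nlinarith [hp.two_le]
        have hexp : (Polynomial.expand F p) ((X + C (β ^ p)) ^ s')
            = (Polynomial.expand F p) (X ^ s' + C γ) := by
          simp only [map_pow, map_add, expand_X, expand_C]
          rw [← add_pow_char, ← pow_mul, ← pow_mul]
          exact h
        have h' := Polynomial.expand_injective hp.pos hexp
        obtain ⟨i, hi, hγ⟩ := ih s' hlt hs' (β ^ p) γ (pow_ne_zero _ hβ) h'
        refine ⟨i + 1, by rw [hi, pow_succ, mul_comm], ?_⟩
        rw [hγ, ← pow_mul, ← pow_succ']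
      · exfalso
        have hc := congrArg (fun P => Polynomial.coeff P (s - 1)) h
        simp only [coeff_X_add_C_pow, coeff_add, coeff_X_pow, coeff_C] at hc
        rw [if_neg (by omega : ¬ s - 1 = s), if_neg (by omega : ¬ s - 1 = 0)] at hc
        have h1 : s - (s - 1) = 1 := by omega
        have h2 : s.choose (s - 1) = s := by
          rw [← Nat.choose_symm (by omega : s - 1 ≤ s), h1, Nat.choose_one_right]
        rw [h1, h2, pow_one, add_zero] at hc
        have hsF : (s : F) = 0 := by
          rcases mul_eq_zero.mp hc with h | h
          · exact absurd h hβ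
          · exact h
        exact hps ((CharP.cast_eq_zero_iff F p s).mp hsF)

private lemma aux_mod (p e i : ℕ) (hp : 2 ≤ p) (he : 0 < e)
    (h : p ^ i ≡ 1 [MOD p ^ e - 1]) : ∃ m, i = e * m := by
  rcases Nat.eq_or_lt_of_le he with he1 | he2
  · exact ⟨i, by subst he1; omega⟩
  · -- e ≥ 2
    have hmod : p ^ (i % e) ≡ p ^ i [MOD p ^ e - 1] := by
      conv_rhs => rw [← Nat.div_add_mod i e]
      rw [pow_add, pow_mul]
      calc p ^ (i % e) = 1 * p ^ (i % e) := (one_mul _).symm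
        _ ≡ (p ^ e) ^ (i / e) * p ^ (i % e) [MOD p ^ e - 1] := by
            refine Nat.ModEq.mul_right _ ?_
            have h1 : 1 ≤ p ^ e := Nat.one_le_pow _ _ (by omega)
            have hbase : (1:ℕ) ≡ p ^ e [MOD p ^ e - 1] := (Nat.modEq_iff_dvd' h1).mpr dvd_rfl
            simpa using hbase.pow (i / e)
    have h2 : p ^ (i % e) ≤ p ^ (e - 1) := Nat.pow_le_pow_right (by omega)
      (by have := Nat.mod_lt i (show 0 < e by omega); omega)
    have h3 : p * p ^ (e - 1) = p ^ e := by
      rw [← pow_succ']; congr 1; omega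
    have h4 : 2 ≤ p ^ (e - 1) := by
      calc 2 ≤ p := hp
        _ = p ^ 1 := (pow_one p).symm
        _ ≤ p ^ (e - 1) := Nat.pow_le_pow_right (by omega) (by omega)
    have h5 : 2 * p ^ (e - 1) ≤ p ^ e := by
      rw [← h3]; exact Nat.mul_le_mul_right _ hp
    have hlt : p ^ (i % e) < p ^ e - 1 := by omega
    have h1lt : 1 < p ^ e - 1 := by omega
    have heq1 : p ^ (i % e) = 1 := (hmod.trans h).eq_of_lt_of_lt hlt h1lt
    have hme : i % e = 0 := by
      by_contra hne
      have : p ≤ p ^ (i % e) := by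
        calc p = p ^ 1 := (pow_one p).symm
          _ ≤ p ^ (i % e) := Nat.pow_le_pow_right (by omega) (by omega)
      omega
    exact ⟨i / e, by have := Nat.div_add_mod i e; omega⟩


set_option synthInstance.maxHeartbeats 1000000 in
set_option maxHeartbeats 2000000 in
private lemma aux_main {p : ℕ} [Fact p.Prime] {K : Type*} [Field K] [CharP K p]
    [Algebra (ZMod p) K]
    (e : ℕ) (he : 0 < e) (d : ℕ) (hd : 0 < d) (hqd : ¬ p ^ e ∣ d)
    (t : K) (htr : Transcendental (ZMod p) t)
    (α : K) (hα : orderOf α = p ^ e - 1)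
    (x : K) (hx : x ^ d = t ^ d + α) :
    {n : ℤ | x ^ n = t ^ n + α} = {n : ℤ | ∃ m : ℕ, n = (d : ℤ) * ((p ^ e : ℕ) : ℤ) ^ m} := by
  have hp := (Fact.out : p.Prime)
  have hp2 := hp.two_le
  have hq1 : 1 ≤ p ^ e := Nat.one_le_pow _ _ (by omega)
  have hq2 : 2 ≤ p ^ e := le_trans hp2 (Nat.le_self_pow (by omega) p)
  have hα1 : α ^ (p ^ e - 1) = 1 := hα ▸ pow_orderOf_eq_one α
  have hα0 : α ≠ 0 := by
    rintro rfl
    rw [zero_pow (by omega : p ^ e - 1 ≠ 0)] at hα1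
    exact zero_ne_one hα1
  have hαq : α ^ (p ^ e) = α := by
    conv_lhs => rw [show p ^ e = (p ^ e - 1) + 1 by omega]
    rw [pow_succ, hα1, one_mul]
  -- the p-part of d
  set j := d.factorization p with hjdef
  set d' := d / p ^ j with hd'def
  have hdd : p ^ j * d' = d := Nat.ordProj_mul_ordCompl_eq_self d p
  have hpd' : ¬ p ∣ d' := Nat.not_dvd_ordCompl hp (by omega)
  have hd'0 : 0 < d' := Nat.ordCompl_pos p (by omega : d ≠ 0)
  have hje : j < e := by
    by_contra hc
    push_neg at hc
    exact hqd (dvd_trans (pow_dvd_pow p hc) (Nat.ordProj_dvd d p))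
  set β := α ^ p ^ (e - j) with hβdef
  have hβ0 : β ≠ 0 := pow_ne_zero _ hα0
  have hβj : β ^ p ^ j = α := by
    rw [hβdef, ← pow_mul, ← pow_add, show (e - j) + j = e by omega, hαq]
  -- x ^ d' = t ^ d' + β
  have hxd' : x ^ d' = t ^ d' + β := by
    have h1 : (x ^ d' - (t ^ d' + β)) ^ p ^ j = 0 := by
      rw [sub_pow_char_pow, add_pow_char_pow, ← pow_mul, ← pow_mul, hβj,
        mul_comm d' (p ^ j), hdd, hx, sub_self]
    exact sub_eq_zero.mp (pow_eq_zero_iff (by positivity : p ^ j ≠ 0) |>.mp h1)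
  -- the subfield F = 𝔽_p(α)
  set F := IntermediateField.adjoin (ZMod p) {α} with hFdef
  haveI : CharP F p := charP_of_injective_algebraMap (algebraMap (ZMod p) F).injective p
  have hαint : IsIntegral (ZMod p) α := by
    refine ⟨X ^ (p ^ e - 1) - C 1, monic_X_pow_sub_C 1 (by omega), ?_⟩
    simp [hα1]
  haveI : FiniteDimensional (ZMod p) F := IntermediateField.adjoin.finiteDimensional hαint
  have htF : Transcendental F t := by
    intro hat
    exact htr (isIntegral_trans (R := ZMod p) t hat.isIntegral).isAlgebraic
  set α' : F := ⟨α, IntermediateField.mem_adjoin_simple_self (ZMod p) α⟩ with hα'def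
  have hα'K : algebraMap F K α' = α := rfl
  have hα'0 : α' ≠ 0 := by
    intro h0
    exact hα0 (by rw [← hα'K, h0, map_zero])
  set β' : F := α' ^ p ^ (e - j) with hβ'def
  have hβ'K : algebraMap F K β' = β := by rw [hβ'def, map_pow, hα'K]
  have hβ'0 : β' ≠ 0 := pow_ne_zero _ hα'0
  have hψ : Function.Injective (Polynomial.aeval (R := F) t) :=
    transcendental_iff_injective.mp htF
  have hPB0 : t ^ d' + β ≠ 0 := by
    intro h0
    have h1 : Polynomial.aeval (R := F) t (X ^ d' + C β') = Polynomial.aeval (R := F) t 0 := by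
      rw [map_add, map_pow, aeval_X, aeval_C, hβ'K, map_zero]
      exact h0
    have h2 := hψ h1
    have h3 := congrArg (fun P => Polynomial.coeff P d') h2
    simp only [coeff_add, coeff_X_pow, if_pos rfl, coeff_C,
      if_neg (by omega : ¬ d' = 0), coeff_zero, add_zero] at h3
    exact one_ne_zero h3
  have ht0 : t ≠ 0 := fun h0 => htr (h0 ▸ isAlgebraic_zero)
  have hxd'0 : x ^ d' ≠ 0 := by rw [hxd']; exact hPB0
  have hx0 : x ≠ 0 := fun h0 => hxd'0 (by rw [h0, zero_pow (by omega : d' ≠ 0)])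
  have hαqm : ∀ m : ℕ, α ^ (p ^ e) ^ m = α := by
    intro m
    induction m with
    | zero => simp
    | succ k ihk => rw [pow_succ, pow_mul, ihk, hαq]
  ext n
  simp only [Set.mem_setOf_eq]
  constructor
  · intro hn
    rcases lt_trichotomy n 0 with hneg | hzero | hpos
    · -- n < 0 : contradiction
      exfalso
      set m := (-n).toNat with hmdef
      have hm0 : 0 < m := by omega
      have hnm : n = -(m : ℤ) := by omega
      rw [hnm, zpow_neg, zpow_neg, zpow_natCast, zpow_natCast] at hn
      have htm0 : (1 : K) + α * t ^ m ≠ 0 := by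
        intro hcon
        have h1 : Polynomial.aeval (R := F) t (1 + C α' * X ^ m) = Polynomial.aeval (R := F) t 0 := by
          rw [map_add, map_mul, map_pow, aeval_X, aeval_C, hα'K, map_one, map_zero]
          exact hcon
        have h2 := hψ h1
        have h3 := congrArg (fun P => Polynomial.eval 0 P) h2
        simp only [eval_add, eval_one, eval_mul, eval_C, eval_pow, eval_X,
          zero_pow hm0.ne', mul_zero, add_zero, eval_zero] at h3
        exact one_ne_zero h3
      have hxm0 : x ^ m ≠ 0 := pow_ne_zero _ hx0
      have htm0' : t ^ m ≠ 0 := pow_ne_zero _ ht0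
      have hkey : t ^ m = x ^ m * (1 + α * t ^ m) := by
        have h4 : (x ^ m)⁻¹ * (x ^ m * t ^ m) = ((t ^ m)⁻¹ + α) * (x ^ m * t ^ m) := by
          rw [hn]
        rw [inv_mul_cancel_left₀ hxm0, add_mul,
          show (t ^ m)⁻¹ * (x ^ m * t ^ m) = x ^ m from by field_simp] at h4
        linear_combination h4
      have hKrel : (t ^ d + α) ^ m * (1 + α * t ^ m) ^ d = t ^ (m * d) := by
        have h1 : (t ^ m) ^ d = (x ^ m) ^ d * (1 + α * t ^ m) ^ d := by
          rw [← mul_pow, ← hkey]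
        rw [← pow_mul t, ← pow_mul x, mul_comm m d, pow_mul x, hx] at h1
        rw [mul_comm m d]
        exact h1.symm
      have hpoly : ((X ^ d + C α') ^ m * (1 + C α' * X ^ m) ^ d : Polynomial F)
          = X ^ (m * d) := by
        apply hψ
        rw [map_mul, map_pow, map_pow, map_add, map_pow, aeval_X, aeval_C,
          map_add, map_one, map_mul, map_pow, aeval_X, aeval_C, hα'K, map_pow, aeval_X]
        exact hKrel
      have hev := congrArg (fun P => Polynomial.eval 0 P) hpoly
      simp only [eval_mul, eval_pow, eval_add, eval_X, eval_C, eval_one,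
        zero_pow (show d ≠ 0 by omega), zero_pow (show m * d ≠ 0 by positivity),
        zero_pow hm0.ne', zero_add, mul_zero, add_zero, one_pow, mul_one] at hev
      exact hα'0 (pow_eq_zero_iff (by omega : m ≠ 0) |>.mp hev)
    · -- n = 0 : contradiction
      exfalso
      rw [hzero] at hn
      simp only [zpow_zero] at hn
      exact hα0 (by linear_combination -hn)
    · -- n > 0 : the main case
      set N := n.toNat with hNdef
      have hNn : (N : ℤ) = n := Int.toNat_of_nonneg (by omega)
      have hN0 : 0 < N := by omega
      have hN : x ^ N = t ^ N + α := by
        rw [← hNn, zpow_natCast, zpow_natCast] at hn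
        exact hn
      set s := N / d' with hsdef
      set r := N % d' with hrdef
      have hNrs : d' * s + r = N := Nat.div_add_mod N d'
      have hr_lt : r < d' := Nat.mod_lt _ hd'0
      have hr0 : r = 0 := by
        by_contra hr0
        have hr_pos : 0 < r := Nat.pos_of_ne_zero hr0
        set ψR : Polynomial F →+* K :=
          (Polynomial.aeval (R := F) t : Polynomial F →ₐ[F] K).toRingHom with hψRdef
        have hψRinj : Function.Injective ψR := hψ
        set φ : RatFunc F →+* K :=
          IsFractionRing.lift (A := Polynomial F) (K := RatFunc F) hψRinj with hφdef
        have hφa : ∀ P : Polynomial F,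
            φ (algebraMap (Polynomial F) (RatFunc F) P) = Polynomial.aeval (R := F) t P :=
          fun P => IsFractionRing.lift_algebraMap hψRinj P
        have hφinj : Function.Injective φ := φ.injective
        set A := algebraMap (Polynomial F) (RatFunc F) with hAdef
        set PB : Polynomial F := X ^ d' + C β' with hPBdef
        set PA : Polynomial F := X ^ N + C α' with hPAdef
        have hvB : φ (A PB) = x ^ d' := by
          rw [hφa, map_add, map_pow, aeval_X, aeval_C, hβ'K]
          exact hxd'.symm
        have hvA : φ (A PA) = x ^ N := by
          rw [hφa, map_add, map_pow, aeval_X, aeval_C, hα'K]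
          exact hN.symm
        set u := A PA * A PB ^ (-(s : ℤ)) with hudef
        have hφu : φ u = x ^ r := by
          rw [hudef, map_mul, map_zpow₀, hvA, hvB,
            show x ^ N = (x ^ d') ^ s * x ^ r from by rw [← pow_mul, ← pow_add, hNrs],
            zpow_neg, zpow_natCast, mul_comm ((x ^ d') ^ s) (x ^ r)]
          exact mul_inv_cancel_right₀ (pow_ne_zero s hxd'0) _
        set g := r.gcd d' with hgdef
        have hg_pos : 0 < g := Nat.gcd_pos_of_pos_left _ hr_pos
        have hgr : g ≤ r := Nat.le_of_dvd hr_pos (Nat.gcd_dvd_left r d')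
        have hgd : g ∣ d' := Nat.gcd_dvd_right r d'
        set V := u ^ r.gcdA d' * A PB ^ r.gcdB d' with hVdef
        have hφV : φ V = x ^ g := by
          rw [hVdef, map_mul, map_zpow₀, map_zpow₀, hφu, hvB,
            ← zpow_natCast x r, ← zpow_natCast x d', ← zpow_mul, ← zpow_mul,
            ← zpow_add₀ hx0, ← Nat.gcd_eq_gcd_ab, zpow_natCast]
        set k := d' / g with hkdef
        have hgk : g * k = d' := Nat.mul_div_cancel' hgd
        have hk2 : 2 ≤ k := by
          rcases Nat.lt_or_ge k 2 with hlt2 | hge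
          · interval_cases k <;> omega
          · exact hge
        have hVk : V ^ k = A PB := hφinj (by rw [map_pow, hφV, ← pow_mul, hgk, hvB])
        set ρ := k.minFac with hρdef
        have hρp : Nat.Prime ρ := Nat.minFac_prime (by omega)
        have hρ2 : 2 ≤ ρ := hρp.two_le
        have hρk : ρ * (k / ρ) = k := Nat.mul_div_cancel' (Nat.minFac_dvd k)
        set W := V ^ (k / ρ) with hWdef
        have hWρ : W ^ ρ = A PB := by
          rw [hWdef, ← pow_mul, mul_comm (k / ρ) ρ, hρk, hVk]
        have hWint : IsIntegral (Polynomial F) W := by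
          refine ⟨X ^ ρ - C PB, monic_X_pow_sub_C PB (by omega), ?_⟩
          rw [eval₂_sub, eval₂_X_pow, eval₂_C, hWρ, sub_self]
        obtain ⟨Q, hQ⟩ := IsIntegrallyClosed.isIntegral_iff.mp hWint
        have hQρ : Q ^ ρ = PB := by
          apply IsFractionRing.injective (Polynomial F) (RatFunc F)
          rw [map_pow, hQ, hWρ]
        have hdegPB : PB.natDegree = d' := by
          rw [hPBdef]; exact natDegree_X_pow_add_C
        have hdegQ : ρ * Q.natDegree = d' := by
          rw [← hdegPB, ← hQρ, natDegree_pow]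
        have hQdeg : Q.natDegree ≠ 0 := by
          intro h0; rw [h0, mul_zero] at hdegQ; omega
        have hsep : (X ^ d' - C (-β') : Polynomial F).Separable :=
          separable_X_pow_sub_C (-β') (by
            rw [Ne, CharP.cast_eq_zero_iff F p]; exact hpd') (neg_ne_zero.mpr hβ'0)
        have hsq : Squarefree PB := by
          have hform : (X ^ d' - C (-β') : Polynomial F) = PB := by
            rw [map_neg, sub_neg_eq_add, hPBdef]
          exact hform ▸ hsep.squarefree
        have hQQ : Q * Q ∣ PB := by
          rw [← hQρ, ← sq]
          exact pow_dvd_pow Q hρ2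
        exact hQdeg (Polynomial.natDegree_eq_zero_of_isUnit (hsq Q hQQ))
      -- now r = 0, so N = d' * s
      have hNs : N = d' * s := by omega
      have hs0 : 0 < s := by
        rcases Nat.eq_zero_or_pos s with h0 | h
        · rw [h0, Nat.mul_zero] at hNrs; omega
        · exact h
      have hpoly : ((X ^ d' + C β') ^ s : Polynomial F) = X ^ (d' * s) + C α' := by
        apply hψ
        rw [map_pow, map_add, map_pow, aeval_X, aeval_C, hβ'K,
          map_add, map_pow, aeval_X, aeval_C, hα'K, ← hxd', ← pow_mul, ← hNs]
        exact hN
      have hpoly2 : ((X + C β') ^ s : Polynomial F) = X ^ s + C α' := by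
        apply Polynomial.expand_injective hd'0
        rw [map_pow, map_add, expand_X, expand_C, hpoly,
          map_add, map_pow, expand_X, expand_C, ← pow_mul]
      obtain ⟨i, hsi, hγ⟩ := aux_key p s hs0 β' α' hβ'0 hpoly2
      have hαβ : α = β ^ p ^ i := by
        rw [← hα'K, hγ, map_pow, hβ'K]
      have hαpow : α ^ p ^ ((e - j) + i) = α := by
        rw [pow_add, pow_mul, ← hβdef, ← hαβ]
      set A' := (e - j) + i with hA'def
      have h1A : 1 ≤ p ^ A' := Nat.one_le_pow _ _ (by omega)
      have hordA : α ^ (p ^ A' - 1) = 1 := by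
        have h5 : α ^ (p ^ A' - 1) * α = 1 * α := by
          rw [one_mul, ← pow_succ, show p ^ A' - 1 + 1 = p ^ A' by omega, hαpow]
        exact mul_right_cancel₀ hα0 h5
      have hdvd : p ^ e - 1 ∣ p ^ A' - 1 := hα ▸ orderOf_dvd_of_pow_eq_one hordA
      have hmodeq : p ^ A' ≡ 1 [MOD p ^ e - 1] :=
        ((Nat.modEq_iff_dvd' h1A).mpr hdvd).symm
      obtain ⟨m', hm'⟩ := aux_mod p e A' hp2 he hmodeq
      have hm'1 : 1 ≤ m' := by
        rcases Nat.eq_zero_or_pos m' with h0 | h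
        · rw [h0, mul_zero] at hm'; omega
        · exact h
      have hmul : e * m' = e * (m' - 1) + e := by
        rcases m' with _ | m''
        · omega
        · simp [Nat.mul_succ]
      have hi : i = j + e * (m' - 1) := by omega
      refine ⟨m' - 1, ?_⟩
      have hNval : N = d * (p ^ e) ^ (m' - 1) := by
        rw [hNs, hsi, hi, pow_add, ← mul_assoc, mul_comm d' (p ^ j), hdd, ← pow_mul]
      rw [← hNn, hNval]
      push_cast
      ring
  · -- the easy inclusion
    rintro ⟨m, rfl⟩
    have hnat : x ^ (d * (p ^ e) ^ m) = t ^ (d * (p ^ e) ^ m) + α := by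
      calc x ^ (d * (p ^ e) ^ m) = (x ^ d) ^ (p ^ e) ^ m := pow_mul x d _
        _ = (t ^ d + α) ^ p ^ (e * m) := by rw [hx, pow_mul p e m]
        _ = (t ^ d) ^ p ^ (e * m) + α ^ p ^ (e * m) := add_pow_char_pow _ _ p (e * m)
        _ = t ^ (d * (p ^ e) ^ m) + α := by
            rw [show α ^ p ^ (e * m) = α from by rw [pow_mul p e m]; exact hαqm m,
              ← pow_mul t, pow_mul p e m]
    have hcast : (d : ℤ) * ((p ^ e : ℕ) : ℤ) ^ m = ((d * (p ^ e) ^ m : ℕ) : ℤ) := by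
      push_cast; ring
    rw [hcast, zpow_natCast, zpow_natCast]
    exact hnat

/-- **Lemma 6.2.** Let `K` be the algebraic closure of `𝔽_p(t)`, `q = p^e` a power of `p`,
`d` a positive integer with `q ∤ d`, `α ∈ K` a generator of the cyclic group `𝔽_q^×`
(i.e. an element of multiplicative order `q − 1`), and `x ∈ K` a `d`-th root of `t^d + α`.
Then `{n ∈ ℤ : x^n = t^n + α} = {d·q^m : m ∈ ℕ}`. -/
theorem stmt_14 {p : ℕ} [Fact p.Prime] (e : ℕ) (he : 0 < e)
    (q : ℕ) (hq : q = p ^ e) (d : ℕ) (hd : 0 < d) (hqd : ¬ q ∣ d)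
    (t : AlgebraicClosure (RatFunc (ZMod p)))
    (ht : t = algebraMap (RatFunc (ZMod p)) (AlgebraicClosure (RatFunc (ZMod p))) RatFunc.X)
    (α : AlgebraicClosure (RatFunc (ZMod p))) (hα : orderOf α = q - 1)
    (x : AlgebraicClosure (RatFunc (ZMod p))) (hx : x ^ d = t ^ d + α) :
    {n : ℤ | x ^ n = t ^ n + α} = {n : ℤ | ∃ m : ℕ, n = (d : ℤ) * (q : ℤ) ^ m} := by
  subst hq ht
  letI K := AlgebraicClosure (RatFunc (ZMod p))
  haveI h1 : CharP (RatFunc (ZMod p)) p :=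
    charP_of_injective_algebraMap (algebraMap (ZMod p) (RatFunc (ZMod p))).injective p
  haveI h2 : CharP (AlgebraicClosure (RatFunc (ZMod p))) p :=
    charP_of_injective_algebraMap
      (algebraMap (RatFunc (ZMod p)) (AlgebraicClosure (RatFunc (ZMod p)))).injective p
  have htr : Transcendental (ZMod p)
      (algebraMap (RatFunc (ZMod p)) (AlgebraicClosure (RatFunc (ZMod p))) RatFunc.X) := by
    have h0 : Transcendental (ZMod p) (Polynomial.X : Polynomial (ZMod p)) :=
      Polynomial.transcendental_X (ZMod p)
    have h3 : Transcendental (ZMod p) (RatFunc.X : RatFunc (ZMod p)) := by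
      have := (transcendental_algebraMap_iff (R := ZMod p) (S := Polynomial (ZMod p))
        (A := RatFunc (ZMod p)) (a := Polynomial.X)
        (IsFractionRing.injective (Polynomial (ZMod p)) (RatFunc (ZMod p)))).mpr h0
      rwa [RatFunc.algebraMap_X] at this
    exact (transcendental_algebraMap_iff
      (algebraMap (RatFunc (ZMod p)) (AlgebraicClosure (RatFunc (ZMod p)))).injective).mpr h3
  exact aux_main e he d hd hqd _ htr α hα x hx
end

section
/- Let G be a semi-abelian variety over an algebraically closed field of characteristic p > 0 on which multiplication by p, denoted [p], is injective on K-points, let q be a power of p, let g ∈ G(K), let c, d be integers with (q−1) | (c+d) and d ≠ 0, and let C ⊆ G be an irreducible closed subcurve. If (c + d·q^m)/(q−1) · g ∈ C(K) for all positive integers m, then (c + d)/(q−1) · g ∈ C(K). -/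
/-- **Completeness of return sets (key step of Theorem 6.1).**  Let `G` be a semi-abelian
variety over an algebraically closed field of characteristic `p > 0` on which multiplication
by `p` is injective on `K`-points, `q` a power of `p`, `g ∈ G(K)`, `c, d` integers with
`(q−1) ∣ (c+d)` and `d ≠ 0`, and `C ⊆ G` an irreducible closed subcurve.  If
`(c + d·q^m)/(q−1) · g ∈ C(K)` for all positive integers `m`, then `(c+d)/(q−1) · g ∈ C(K)`.

We work with the group `G` of `K`-points equipped with its Zariski topology; the geometric
input is recorded by: translations are homeomorphisms, multiplication by `q` is continuous,
closed (it is a finite morphism) and injective, and `C` is an irreducible closed subset all of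
whose proper closed subsets are finite (i.e. an irreducible closed curve). -/
theorem stmt_16 {p : ℕ} [Fact p.Prime] (G : Type*) [AddCommGroup G] [TopologicalSpace G]
    (htrans : ∀ a : G, IsHomeomorph (fun x : G => x + a))
    (hp_inj : Function.Injective (fun x : G => (p : ℤ) • x))
    (e : ℕ) (he : 0 < e) (q : ℕ) (hq : q = p ^ e)
    (hq_cont : Continuous fun x : G => (q : ℤ) • x)
    (hq_closed : IsClosedMap fun x : G => (q : ℤ) • x)
    (g : G) (c d : ℤ) (hdvd : ((q : ℤ) - 1) ∣ (c + d)) (hd : d ≠ 0)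
    (C : Set G) (hC_closed : IsClosed C) (hC_irr : IsIrreducible C)
    (hC_curve : ∀ F : Set G, F ⊆ C → IsClosed F → F ≠ C → F.Finite)
    (hmem : ∀ m : ℕ, 0 < m → ((c + d * (q : ℤ) ^ m) / ((q : ℤ) - 1)) • g ∈ C) :
    ((c + d) / ((q : ℤ) - 1)) • g ∈ C := by
  have hp2 : 1 < p := (Fact.out : p.Prime).one_lt
  have hq2 : 2 ≤ q := by
    subst hq
    calc 2 ≤ p := hp2
    _ = p ^ 1 := (pow_one p).symm
    _ ≤ p ^ e := Nat.pow_le_pow_right (by omega) he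
  have hr0 : (q : ℤ) - 1 ≠ 0 := by
    have : (2 : ℤ) ≤ (q : ℤ) := by exact_mod_cast hq2
    omega
  obtain ⟨k, hk⟩ := hdvd
  set t : ℕ → ℤ := fun m => ∑ i ∈ Finset.range m, (q : ℤ) ^ i with ht
  have hgeom : ∀ m : ℕ, ((q : ℤ) - 1) * t m = (q : ℤ) ^ m - 1 := by
    intro m
    rw [ht]
    rw [mul_comm]
    exact geom_sum_mul _ _
  have hsm : ∀ m : ℕ, (c + d * (q : ℤ) ^ m) / ((q : ℤ) - 1) = k + d * t m := by
    intro m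
    have h1 : c + d * (q : ℤ) ^ m = ((q : ℤ) - 1) * (k + d * t m) := by
      have h2 := hgeom m
      linear_combination hk - d * h2
    rw [h1, Int.mul_ediv_cancel_left _ hr0]
  have hk0 : (c + d) / ((q : ℤ) - 1) = k := by
    rw [hk, Int.mul_ediv_cancel_left _ hr0]
  rw [hk0]
  have hmem' : ∀ m : ℕ, (k + d * t (m + 1)) • g ∈ C := by
    intro m
    have := hmem (m + 1) (Nat.succ_pos m)
    rwa [hsm] at this
  -- injectivity of multiplication by q (and its powers)
  have hpow_inj : ∀ n : ℕ, Function.Injective (fun x : G => ((p : ℤ) ^ n) • x) := by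
    intro n
    induction n with
    | zero => intro x y h; simpa using h
    | succ n ih =>
      intro x y h
      simp only [pow_succ, mul_smul] at h
      exact hp_inj (ih h)
  have hqe : (q : ℤ) = (p : ℤ) ^ e := by rw [hq, Nat.cast_pow]
  have hq_inj : Function.Injective (fun x : G => (q : ℤ) • x) := by
    intro x y h
    have hh : ((p : ℤ) ^ e) • x = ((p : ℤ) ^ e) • y := by
      simp only at h
      rw [hqe] at h
      exact h
    exact hpow_inj e hh
  have hqpow_inj : ∀ n : ℕ, Function.Injective (fun x : G => ((q : ℤ) ^ n) • x) := by
    intro n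
    induction n with
    | zero => intro x y h; simpa using h
    | succ n ih =>
      intro x y h
      simp only [pow_succ, mul_smul] at h
      exact hq_inj (ih h)
  -- the map f
  set f : G → G := fun x => (q : ℤ) • x + (-c) • g with hf
  have hf_cont : Continuous f := ((htrans ((-c) • g)).continuous).comp hq_cont
  have hf_closed : IsClosedMap f := ((htrans ((-c) • g)).isClosedMap).comp hq_closed
  have hf_inj : Function.Injective f := by
    intro x y h
    simp only [hf] at h
    exact hq_inj (add_right_cancel h)
  have hstep : ∀ a : ℤ, f (a • g) = ((q : ℤ) * a - c) • g := by
    intro a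
    simp only [hf, smul_smul]
    rw [← add_smul, sub_eq_add_neg]
  have htsucc : ∀ m : ℕ, t (m + 1) = (q : ℤ) * t m + 1 := by
    intro m
    simp only [ht]
    exact geom_sum_succ
  have hts : ∀ n : ℕ, t (n + 1) = t n + (q : ℤ) ^ n := by
    intro n
    simp only [ht]
    exact Finset.sum_range_succ _ n
  have hstep' : ∀ m : ℕ, f ((k + d * t m) • g) = (k + d * t (m + 1)) • g := by
    intro m
    rw [hstep]
    congr 1
    have h1 := htsucc m
    linear_combination -hk - d * h1
  have ht0 : t 0 = 0 := by simp [ht]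
  by_cases hfin : (Set.range fun m : ℕ => (k + d * t (m + 1)) • g).Finite
  · -- Case B: the return points are finite; some later point equals k • g.
    have hnotinj : ¬ Function.Injective (fun m : ℕ => (k + d * t (m + 1)) • g) := by
      intro hinj
      exact Set.infinite_range_of_injective hinj hfin
    rw [Function.not_injective_iff] at hnotinj
    obtain ⟨a0, b0, heq0, hne0⟩ := hnotinj
    -- wlog a < b
    have key : ∀ a b : ℕ, a < b →
        (k + d * t (a + 1)) • g = (k + d * t (b + 1)) • g → k • g ∈ C := by
      intro a b hlt heq
      have htadd : ∀ u v : ℕ, t (u + v) = t u + (q : ℤ) ^ u * t v := by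
        intro u v
        induction v with
        | zero => simp [ht0]
        | succ v ih =>
          have hA : t (u + v + 1) = t (u + v) + (q : ℤ) ^ (u + v) := hts (u + v)
          have hC : t (v + 1) = t v + (q : ℤ) ^ v := hts v
          have hD : (q : ℤ) ^ (u + v) = (q : ℤ) ^ u * (q : ℤ) ^ v := pow_add _ _ _
          have h1 : u + (v + 1) = u + v + 1 := by omega
          rw [h1]
          linear_combination hA + ih - (q : ℤ) ^ u * hC + hD
      have hb1 : b + 1 = (a + 1) + (b - a) := by omega
      have hdiff : (k + d * t (b + 1)) - (k + d * t (a + 1)) =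
          (q : ℤ) ^ (a + 1) * (d * t (b - a)) := by
        rw [hb1, htadd (a + 1) (b - a)]
        ring
      have hzero : ((q : ℤ) ^ (a + 1)) • ((d * t (b - a)) • g) = 0 := by
        rw [← mul_smul, ← hdiff, sub_smul, heq, sub_self]
      have h0 : (d * t (b - a)) • g = 0 := by
        apply hqpow_inj (a + 1)
        simpa using hzero
      have hba : b - a = (b - a - 1) + 1 := by omega
      have := hmem' (b - a - 1)
      rw [← hba] at this
      have heq2 : (k + d * t (b - a)) • g = k • g := by
        rw [add_smul, h0, add_zero]
      rwa [heq2] at this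
    rcases lt_or_gt_of_ne hne0 with h | h
    · exact key a0 b0 h heq0
    · exact key b0 a0 h heq0.symm
  · -- Case A: infinitely many return points; then f(C) = C.
    have hinf : (Set.range fun m : ℕ => (k + d * t (m + 1)) • g).Infinite := hfin
    set D : Set G := f '' C with hD
    have hD_closed : IsClosed D := hf_closed C hC_closed
    have hC_inf : C.Infinite := hinf.mono (by rintro x ⟨m, rfl⟩; exact hmem' m)
    -- C ⊆ D
    have hE_inf : (Set.range fun m : ℕ => (k + d * t (m + 2)) • g).Infinite := by
      intro hEfin
      apply hinf
      have hsub : (Set.range fun m : ℕ => (k + d * t (m + 1)) • g) ⊆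
          insert ((k + d * t 1) • g) (Set.range fun m : ℕ => (k + d * t (m + 2)) • g) := by
        rintro x ⟨m, rfl⟩
        cases m with
        | zero => exact Set.mem_insert _ _
        | succ m => exact Set.mem_insert_of_mem _ ⟨m, rfl⟩
      exact (hEfin.insert _).subset hsub
    have hCD : C ⊆ D := by
      by_contra hnot
      have hE_closed : IsClosed (C ∩ D) := hC_closed.inter hD_closed
      have hE_ne : C ∩ D ≠ C := by
        intro hEC
        exact hnot (Set.inter_eq_left.mp hEC)
      have hE_fin := hC_curve (C ∩ D) Set.inter_subset_left hE_closed hE_ne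
      apply hE_inf
      apply hE_fin.subset
      rintro x ⟨m, rfl⟩
      constructor
      · exact hmem' (m + 1)
      · exact ⟨(k + d * t (m + 1)) • g, hmem' m, hstep' (m + 1)⟩
    -- D is a curve
    have hD_curve : ∀ F : Set G, F ⊆ D → IsClosed F → F ≠ D → F.Finite := by
      intro F hFD hF_closed hF_ne
      set F' : Set G := C ∩ f ⁻¹' F with hF'
      have hF'_closed : IsClosed F' := hC_closed.inter (hF_closed.preimage hf_cont)
      have himg : f '' F' = F := by
        rw [hF', Set.image_inter_preimage]
        exact Set.inter_eq_right.mpr hFD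
      have hF'_ne : F' ≠ C := by
        intro hEC
        apply hF_ne
        rw [← himg, hEC]
      have := hC_curve F' Set.inter_subset_left hF'_closed hF'_ne
      rw [← himg]
      exact this.image f
    -- C = D
    have hCeqD : C = D := by
      by_contra hne
      exact hC_inf (hD_curve C hCD hC_closed hne)
    -- finish using injectivity
    have h1 : (k + d * t 1) • g ∈ D := by rw [← hCeqD]; exact hmem' 0
    obtain ⟨x, hxC, hxf⟩ := h1
    have h2 : f (k • g) = (k + d * t 1) • g := by
      have := hstep' 0
      rwa [ht0, mul_zero, add_zero] at this
    have : x = k • g := hf_inj (by rw [hxf, h2])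
    rwa [← this]
end
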